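/- In a (v,4)-packing with a maximum PPC 𝒫 of size ρ, if B = {w,x,y,z} ∈ 𝒫 satisfies max{t_w³, t_x³, t_y³, t_z³} ≥ 4, then c_w + c_x + c_y + c_z ≤ v/3 + 5ρ − 19/3, where c_p = t_p³ + t_p²/2 + t_p¹/3 + t_p⁰/4. -/

import Mathlib

/-!
The blocks outside `𝒫` through a point `p` of a block `b₀ ∈ 𝒫` pairwise meet only in `p`. Their
points off the covered set `P` are therefore distinct, and so are their points of `P` other than
`p`, which avoid `b₀`; this gives `3t_p³ + 2t_p² + t_p¹ ≤ v − 4ρ` and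
`t_p² + 2t_p¹ + 3t_p⁰ ≤ 4(ρ − 1)`, hence `c_p ≤ v/3 − ρ − 1/3`, and `c_p ≤ 2ρ − 2` when `t_p³ = 0`.
If `t_p³ ≥ 4` and another point `q ∈ b₀` lies on an index-3 block `b_q`, then some index-3 block
through `p` misses `b_q` (they could only meet it in its three uncovered points, each at most
once), and the two blocks replace `b₀` in `𝒫`, contradicting maximality. So the three points of
`b₀` other than `p` have `t³ = 0`, and summing the bounds gives `v/3 + 5ρ − 19/3`.
-/


/-- A `(v,k)`-packing: a family of `k`-subsets of a `v`-set such that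
every pair of points occurs in at most one block. -/
def IsPacking (v k : ℕ) (B : Finset (Finset (Fin v))) : Prop :=
  (∀ b ∈ B, b.card = k) ∧
    ∀ b₁ ∈ B, ∀ b₂ ∈ B, b₁ ≠ b₂ → (b₁ ∩ b₂).card ≤ 1

/-- A partial parallel class: a set of pairwise disjoint blocks of the packing. -/
def IsPPC {v : ℕ} (B P : Finset (Finset (Fin v))) : Prop :=
  P ⊆ B ∧ ∀ b₁ ∈ P, ∀ b₂ ∈ P, b₁ ≠ b₂ → Disjoint b₁ b₂

/-- The maximum PPC of `B` has size `ρ`. -/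
def MaxPPCSize {v : ℕ} (B : Finset (Finset (Fin v))) (ρ : ℕ) : Prop :=
  (∃ P, IsPPC B P ∧ P.card = ρ) ∧ ∀ P, IsPPC B P → P.card ≤ ρ

/-- `β(ρ,v,k)`: the maximum number of blocks in a `(v,k)`-packing whose
maximum partial parallel class has size `ρ`. -/
noncomputable def beta (ρ v k : ℕ) : ℕ :=
  sSup {b | ∃ B : Finset (Finset (Fin v)),
    IsPacking v k B ∧ MaxPPCSize B ρ ∧ B.card = b}

/-- The packing number `D(v,k)`. -/
noncomputable def packingNumber (v k : ℕ) : ℕ :=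
  sSup {b | ∃ B : Finset (Finset (Fin v)), IsPacking v k B ∧ B.card = b}

section

open Finset

variable {v k : ℕ} {B P : Finset (Finset (Fin v))}

-- `coveredPoints P`, `tCount B P p i` and `cWeight B P p` are the paper's `P`, `t_p^i` and `c_p`.
def coveredPoints (P : Finset (Finset (Fin v))) : Finset (Fin v) := P.sup id

def tCount (B P : Finset (Finset (Fin v))) (p : Fin v) (i : ℕ) : ℕ :=
  #{b ∈ B \ P | p ∈ b ∧ #(b \ coveredPoints P) = i}

def cWeight (B P : Finset (Finset (Fin v))) (p : Fin v) : ℚ :=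
  tCount B P p 3 + (tCount B P p 2 : ℚ) / 2 + (tCount B P p 1 : ℚ) / 3 + (tCount B P p 0 : ℚ) / 4

theorem subset_coveredPoints {b : Finset (Fin v)} (hb : b ∈ P) : b ⊆ coveredPoints P :=
  le_sup (f := id) hb

theorem sum_eq_of_card_eq_four {α M : Type*} [DecidableEq α] [AddCommMonoid M] {w x y z : α}
    (h : #{w, x, y, z} = 4) (f : α → M) :
    ∑ q ∈ {w, x, y, z}, f q = f w + f x + f y + f z := by
  have hw : w ∉ ({x, y, z} : Finset α) := fun hw => by
    rw [insert_eq_of_mem hw] at h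
    have := card_le_three (a := x) (b := y) (c := z)
    omega
  rw [card_insert_of_notMem hw] at h
  have hx : x ∉ ({y, z} : Finset α) := fun hx => by
    rw [insert_eq_of_mem hx] at h
    have := card_le_two (a := y) (b := z)
    omega
  rw [card_insert_of_notMem hx] at h
  have hy : y ∉ ({z} : Finset α) := fun hy => by
    rw [insert_eq_of_mem hy, card_singleton] at h
    omega
  rw [sum_insert hw, sum_insert hx, sum_insert hy, sum_singleton, add_assoc, add_assoc]

namespace IsPacking

theorem eq_of_mem_of_mem (hB : IsPacking v k B) {b₁ b₂ : Finset (Fin v)} (h₁ : b₁ ∈ B)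
    (h₂ : b₂ ∈ B) (hne : b₁ ≠ b₂) {p r : Fin v} (hp₁ : p ∈ b₁) (hp₂ : p ∈ b₂) (hr₁ : r ∈ b₁)
    (hr₂ : r ∈ b₂) : r = p := by
  by_contra hrp
  have h1 := hB.2 b₁ h₁ b₂ h₂ hne
  have h2 : 1 < #(b₁ ∩ b₂) :=
    one_lt_card.mpr ⟨r, mem_inter.mpr ⟨hr₁, hr₂⟩, p, mem_inter.mpr ⟨hp₁, hp₂⟩, hrp⟩
  omega

theorem sum_card_le (hB : IsPacking v k B) {p : Fin v} {F : Finset (Finset (Fin v))}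
    (hF : ∀ b ∈ F, b ∈ B ∧ p ∈ b) {g : Finset (Fin v) → Finset (Fin v)} {U : Finset (Fin v)}
    (hg : ∀ b ∈ F, g b ⊆ b.erase p) (hU : ∀ b ∈ F, g b ⊆ U) :
    ∑ b ∈ F, #(g b) ≤ #U := by
  rw [← card_biUnion]
  · exact card_le_card (biUnion_subset.mpr hU)
  · intro b₁ h₁ b₂ h₂ hne
    refine disjoint_left.mpr fun r hr₁ hr₂ => ?_
    obtain ⟨hrp, hr₁⟩ := mem_erase.mp (hg b₁ h₁ hr₁)
    obtain ⟨-, hr₂⟩ := mem_erase.mp (hg b₂ h₂ hr₂)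
    exact hrp (hB.eq_of_mem_of_mem (hF b₁ h₁).1 (hF b₂ h₂).1 hne (hF b₁ h₁).2 (hF b₂ h₂).2
      hr₁ hr₂)

theorem sum_tCount (hB : IsPacking v k B) {p : Fin v} (hp : p ∈ coveredPoints P) (f : ℕ → ℕ) :
    ∑ b ∈ B \ P with p ∈ b, f #(b \ coveredPoints P) = ∑ i ∈ range k, f i * tCount B P p i := by
  have hmaps : ∀ b ∈ {b ∈ B \ P | p ∈ b}, #(b \ coveredPoints P) ∈ range k := by
    intro b hb
    obtain ⟨hbBP, hpb⟩ := mem_filter.mp hb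
    have hsub : b \ coveredPoints P ⊂ b :=
      ssubset_of_subset_of_ne sdiff_subset fun h => (mem_sdiff.mp (h ▸ hpb)).2 hp
    simpa [← hB.1 b (mem_sdiff.mp hbBP).1] using card_lt_card hsub
  rw [← sum_fiberwise_of_maps_to hmaps]
  refine sum_congr rfl fun i _ => ?_
  rw [sum_congr rfl fun b hb => congrArg f (mem_filter.mp hb).2, sum_const, smul_eq_mul,
    mul_comm, filter_filter, tCount]

theorem inter_coveredPoints_eq_singleton (hB : IsPacking v k B) {b : Finset (Fin v)} {p : Fin v}
    (hb : b ∈ B) (hpb : p ∈ b) (hp : p ∈ coveredPoints P) (h : #(b \ coveredPoints P) = k - 1) :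
    b ∩ coveredPoints P = {p} := by
  have hsplit := card_inter_add_card_sdiff b (coveredPoints P)
  have hpos : 0 < #(b ∩ coveredPoints P) := card_pos.mpr ⟨p, mem_inter.mpr ⟨hpb, hp⟩⟩
  rw [hB.1 b hb] at hsplit
  obtain ⟨a, ha⟩ := card_eq_one.mp (by omega : #(b ∩ coveredPoints P) = 1)
  have hpa : p ∈ ({a} : Finset (Fin v)) := ha ▸ mem_inter.mpr ⟨hpb, hp⟩
  rw [ha, mem_singleton.mp hpa]

theorem exists_disjoint_of_le_tCount (hB : IsPacking v k B) {p q : Fin v}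
    {bq : Finset (Fin v)} (hp : p ∈ coveredPoints P) (hpq : p ≠ q) (hbq : bq ∈ B)
    (hqbq : q ∈ bq) (hbqS : bq ∩ coveredPoints P = {q}) (h : k ≤ tCount B P p (k - 1)) :
    ∃ bp ∈ B \ P, bp ∩ coveredPoints P = {p} ∧ Disjoint bp bq := by
  set F := {b ∈ B \ P | p ∈ b ∧ #(b \ coveredPoints P) = k - 1}
  have hFS : ∀ b ∈ F, b ∩ coveredPoints P = {p} := fun b hb => by
    obtain ⟨hbBP, hpb, hb⟩ := mem_filter.mp hb
    exact hB.inter_coveredPoints_eq_singleton (mem_sdiff.mp hbBP).1 hpb hp hb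
  by_contra! hmeet
  have hpbq : p ∉ bq := fun hpbq => hpq (mem_singleton.mp (hbqS ▸ mem_inter.mpr ⟨hpbq, hp⟩))
  have hsum := hB.sum_card_le (p := p) (F := F) (U := bq.erase q) (g := (· ∩ bq))
    (fun b hb => ⟨(mem_sdiff.mp (mem_filter.mp hb).1).1, (mem_filter.mp hb).2.1⟩)
    (fun b _ r hr => mem_erase.mpr ⟨fun h => hpbq (h ▸ (mem_inter.mp hr).2), (mem_inter.mp hr).1⟩)
    (fun b hb _ hr => by
      refine mem_erase.mpr ⟨fun hrq => hpq ?_, (mem_inter.mp hr).2⟩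
      have hqS : q ∈ coveredPoints P := (mem_inter.mp (hbqS ▸ mem_singleton_self q)).2
      exact (mem_singleton.mp (hFS b hb ▸ mem_inter.mpr ⟨hrq ▸ (mem_inter.mp hr).1, hqS⟩)).symm)
  have hmeet' : #F ≤ ∑ b ∈ F, #(b ∩ bq) := by
    rw [card_eq_sum_ones]
    refine sum_le_sum fun b hb => card_pos.mpr (not_disjoint_iff_nonempty_inter.mp ?_)
    exact hmeet b (mem_filter.mp hb).1 (hFS b hb)
  rw [card_erase_of_mem hqbq, hB.1 bq hbq] at hsum
  have hk : 0 < k := hB.1 bq hbq ▸ card_pos.mpr ⟨q, hqbq⟩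
  have hF : k ≤ #F := h
  omega

end IsPacking

namespace IsPPC

theorem card_coveredPoints (hB : IsPacking v k B) (hP : IsPPC B P) :
    #(coveredPoints P) = k * #P := by
  rw [coveredPoints, sup_eq_biUnion, card_biUnion (t := id) fun b₁ h₁ b₂ h₂ => hP.2 b₁ h₁ b₂ h₂]
  exact (sum_const_nat fun b hb => hB.1 b (hP.1 hb)).trans (mul_comm _ _)

theorem sum_mul_tCount_add_le (hB : IsPacking v k B) (hP : IsPPC B P) {p : Fin v}
    (hp : p ∈ coveredPoints P) :
    ∑ i ∈ range k, i * tCount B P p i + k * #P ≤ v := by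
  have hsum := hB.sum_card_le (p := p) (F := {b ∈ B \ P | p ∈ b}) (U := (coveredPoints P)ᶜ)
    (fun b hb => ⟨(mem_sdiff.mp (mem_filter.mp hb).1).1, (mem_filter.mp hb).2⟩)
    (g := (· \ coveredPoints P))
    (fun b _ r hr => mem_erase.mpr ⟨fun h => (mem_sdiff.mp hr).2 (h ▸ hp), (mem_sdiff.mp hr).1⟩)
    (fun b _ r hr => mem_compl.mpr (mem_sdiff.mp hr).2)
  rw [hB.sum_tCount hp fun i => i, card_compl, Fintype.card_fin] at hsum
  have hcov : #(coveredPoints P) ≤ v := card_le_univ _ |>.trans_eq (Fintype.card_fin v)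
  rw [← hP.card_coveredPoints hB]
  omega

theorem sum_sub_mul_tCount_add_le (hB : IsPacking v k B) (hP : IsPPC B P)
    {b₀ : Finset (Fin v)} {p : Fin v} (hb₀ : b₀ ∈ P) (hp : p ∈ b₀) :
    ∑ i ∈ range k, (k - 1 - i) * tCount B P p i + k ≤ k * #P := by
  have hpS := subset_coveredPoints hb₀ hp
  have hsum := hB.sum_card_le (p := p) (F := {b ∈ B \ P | p ∈ b})
    (U := coveredPoints P \ b₀) (g := fun b => (b ∩ coveredPoints P).erase p)
    (fun b hb => ⟨(mem_sdiff.mp (mem_filter.mp hb).1).1, (mem_filter.mp hb).2⟩)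
    (fun b _ => erase_subset_erase p inter_subset_left)
    (by
      intro b hb r hr
      obtain ⟨hbBP, hpb⟩ := mem_filter.mp hb
      obtain ⟨hbB, hbP⟩ := mem_sdiff.mp hbBP
      obtain ⟨hrp, hrb, hrS⟩ := by simpa only [mem_erase, mem_inter] using hr
      refine mem_sdiff.mpr ⟨hrS, fun hr₀ => hrp ?_⟩
      exact hB.eq_of_mem_of_mem hbB (hP.1 hb₀) (fun h => hbP (h ▸ hb₀)) hpb hp hrb hr₀)
  have hcard : ∀ b ∈ {b ∈ B \ P | p ∈ b},
      #((b ∩ coveredPoints P).erase p) = k - 1 - #(b \ coveredPoints P) := by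
    intro b hb
    obtain ⟨hbBP, hpb⟩ := mem_filter.mp hb
    have := card_inter_add_card_sdiff b (coveredPoints P)
    rw [card_erase_of_mem (mem_inter.mpr ⟨hpb, hpS⟩), ← hB.1 b (mem_sdiff.mp hbBP).1]
    omega
  rw [sum_congr rfl hcard, hB.sum_tCount hpS (fun i => k - 1 - i),
    card_sdiff_of_subset (subset_coveredPoints hb₀), hP.card_coveredPoints hB,
    hB.1 b₀ (hP.1 hb₀)] at hsum
  have : k ≤ k * #P := Nat.le_mul_of_pos_right k (card_pos.mpr ⟨b₀, hb₀⟩)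
  omega

theorem mono (hP : IsPPC B P) {Q : Finset (Finset (Fin v))} (hQ : Q ⊆ P) : IsPPC B Q :=
  ⟨hQ.trans hP.1, fun b₁ h₁ b₂ h₂ => hP.2 b₁ (hQ h₁) b₂ (hQ h₂)⟩

theorem insert_of_disjoint (hP : IsPPC B P) {b : Finset (Fin v)} (hb : b ∈ B)
    (hdisj : ∀ b' ∈ P, b' ≠ b → Disjoint b b') : IsPPC B (insert b P) := by
  refine ⟨insert_subset hb hP.1, ?_⟩
  simp only [mem_insert]
  rintro b₁ (rfl | h₁) b₂ (rfl | h₂) hne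
  · exact absurd rfl hne
  · exact hdisj b₂ h₂ hne.symm
  · exact (hdisj b₁ h₁ hne).symm
  · exact hP.2 b₁ h₁ b₂ h₂ hne

theorem disjoint_of_inter_coveredPoints_subset (hP : IsPPC B P) {b₀ b b' : Finset (Fin v)}
    (hb₀ : b₀ ∈ P) (hb' : b' ∈ P) (hne : b' ≠ b₀) (hb : b ∩ coveredPoints P ⊆ b₀) :
    Disjoint b b' :=
  disjoint_left.mpr fun _ hrb hrb' => disjoint_left.mp (hP.2 b₀ hb₀ b' hb' hne.symm)
    (hb (mem_inter.mpr ⟨hrb, subset_coveredPoints hb' hrb'⟩)) hrb'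

theorem exists_card_eq_add_one (hP : IsPPC B P) {b₀ bp bq : Finset (Fin v)} (hb₀ : b₀ ∈ P)
    (hbp : bp ∈ B \ P) (hbq : bq ∈ B \ P) (hbpS : bp ∩ coveredPoints P ⊆ b₀)
    (hbqS : bq ∩ coveredPoints P ⊆ b₀) (hdisj : Disjoint bp bq) (hne : bp ≠ bq) :
    ∃ Q, IsPPC B Q ∧ #Q = #P + 1 := by
  obtain ⟨hbpB, hbpP⟩ := mem_sdiff.mp hbp
  obtain ⟨hbqB, hbqP⟩ := mem_sdiff.mp hbq
  have hrest := hP.mono (erase_subset b₀ P)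
  have hPq : IsPPC B (insert bq (P.erase b₀)) :=
    hrest.insert_of_disjoint hbqB fun b' hb' _ => hP.disjoint_of_inter_coveredPoints_subset hb₀
      (mem_of_mem_erase hb') (ne_of_mem_erase hb') hbqS
  refine ⟨_, hPq.insert_of_disjoint hbpB fun b' hb' _ => ?_, ?_⟩
  · rcases mem_insert.mp hb' with rfl | hb'
    · exact hdisj
    · exact hP.disjoint_of_inter_coveredPoints_subset hb₀ (mem_of_mem_erase hb')
        (ne_of_mem_erase hb') hbpS
  · have hbq' : bq ∉ P.erase b₀ := fun h => hbqP (mem_of_mem_erase h)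
    have hbp' : bp ∉ insert bq (P.erase b₀) := by
      intro h
      rcases mem_insert.mp h with h | h
      exacts [hne h, hbpP (mem_of_mem_erase h)]
    rw [card_insert_of_notMem hbp', card_insert_of_notMem hbq', card_erase_of_mem hb₀]
    have := card_pos.mpr ⟨b₀, hb₀⟩
    omega

theorem tCount_eq_zero_of_le_tCount (hB : IsPacking v k B) (hP : IsPPC B P)
    (hmax : ∀ Q, IsPPC B Q → #Q ≤ #P) {b₀ : Finset (Fin v)} {p q : Fin v} (hb₀ : b₀ ∈ P)
    (hp : p ∈ b₀) (hq : q ∈ b₀) (hpq : p ≠ q) (h : k ≤ tCount B P p (k - 1)) :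
    tCount B P q (k - 1) = 0 := by
  by_contra hq0
  obtain ⟨bq, hbq⟩ := card_pos.mp (Nat.pos_of_ne_zero hq0)
  obtain ⟨hbqBP, hqbq, hbq⟩ := mem_filter.mp hbq
  have hbqS := hB.inter_coveredPoints_eq_singleton (mem_sdiff.mp hbqBP).1 hqbq
    (subset_coveredPoints hb₀ hq) hbq
  obtain ⟨bp, hbpBP, hbpS, hdisj⟩ := hB.exists_disjoint_of_le_tCount
    (subset_coveredPoints hb₀ hp) hpq (mem_sdiff.mp hbqBP).1 hqbq hbqS h
  have hne : bp ≠ bq := fun h => hpq (singleton_injective (hbpS.symm.trans (h ▸ hbqS)))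
  obtain ⟨Q, hQ, hQcard⟩ := hP.exists_card_eq_add_one hb₀ hbpBP hbqBP
    (hbpS ▸ singleton_subset_iff.mpr hp) (hbqS ▸ singleton_subset_iff.mpr hq) hdisj hne
  have := hmax Q hQ
  omega

theorem tCount_constraints (hB : IsPacking v 4 B) (hP : IsPPC B P) {b₀ : Finset (Fin v)}
    {p : Fin v} (hb₀ : b₀ ∈ P) (hp : p ∈ b₀) :
    3 * tCount B P p 3 + 2 * tCount B P p 2 + tCount B P p 1 + 4 * #P ≤ v ∧
      tCount B P p 2 + 2 * tCount B P p 1 + 3 * tCount B P p 0 + 4 ≤ 4 * #P := by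
  have h₁ := hP.sum_mul_tCount_add_le hB (subset_coveredPoints hb₀ hp)
  have h₂ := hP.sum_sub_mul_tCount_add_le hB hb₀ hp
  simp only [sum_range_succ, sum_range_zero] at h₁ h₂
  omega

theorem cWeight_le (hB : IsPacking v 4 B) (hP : IsPPC B P) {b₀ : Finset (Fin v)} {p : Fin v}
    (hb₀ : b₀ ∈ P) (hp : p ∈ b₀) : cWeight B P p ≤ v / 3 - #P - 1 / 3 := by
  obtain ⟨h₁, h₂⟩ := hP.tCount_constraints hB hb₀ hp
  have h₁' := (Nat.cast_le (α := ℚ)).mpr h₁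
  have h₂' := (Nat.cast_le (α := ℚ)).mpr h₂
  push_cast at h₁' h₂'
  rw [cWeight]
  linarith [(tCount B P p 1).cast_nonneg (α := ℚ), (tCount B P p 2).cast_nonneg (α := ℚ)]

theorem cWeight_le_of_tCount_three_eq_zero (hB : IsPacking v 4 B) (hP : IsPPC B P)
    {b₀ : Finset (Fin v)} {p : Fin v} (hb₀ : b₀ ∈ P) (hp : p ∈ b₀) (h₃ : tCount B P p 3 = 0) :
    cWeight B P p ≤ 2 * #P - 2 := by
  have h₂' := (Nat.cast_le (α := ℚ)).mpr (hP.tCount_constraints hB hb₀ hp).2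
  push_cast at h₂'
  rw [cWeight, h₃]
  linarith [(tCount B P p 0).cast_nonneg (α := ℚ), (tCount B P p 1).cast_nonneg (α := ℚ),
    (tCount B P p 2).cast_nonneg (α := ℚ)]

theorem sum_cWeight_le (hB : IsPacking v 4 B) (hP : IsPPC B P)
    (hmax : ∀ Q, IsPPC B Q → #Q ≤ #P) {b₀ : Finset (Fin v)} {p : Fin v} (hb₀ : b₀ ∈ P)
    (hp : p ∈ b₀) (h₄ : 4 ≤ tCount B P p 3) :
    ∑ q ∈ b₀, cWeight B P q ≤ v / 3 + 5 * #P - 19 / 3 := by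
  have hrest : ∑ q ∈ b₀.erase p, cWeight B P q ≤ #(b₀.erase p) • (2 * #P - 2 : ℚ) := by
    refine sum_le_card_nsmul _ _ _ fun q hq => ?_
    obtain ⟨hqp, hq⟩ := mem_erase.mp hq
    exact hP.cWeight_le_of_tCount_three_eq_zero hB hb₀ hq
      (hP.tCount_eq_zero_of_le_tCount hB hmax hb₀ hp hq hqp.symm h₄)
  rw [card_erase_of_mem hp, hB.1 b₀ (hP.1 hb₀), nsmul_eq_mul] at hrest
  rw [← add_sum_erase b₀ _ hp]
  have := hP.cWeight_le hB hb₀ hp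
  push_cast at hrest
  linarith

end IsPPC

end

theorem stmt7 (v ρ : ℕ) (B : Finset (Finset (Fin v)))
    (hpack : IsPacking v 4 B)
    (P : Finset (Finset (Fin v)))
    (hPPC : IsPPC B P) (hcard : P.card = ρ)
    (hmax : ∀ Q, IsPPC B Q → Q.card ≤ ρ)
    (t : Fin v → ℕ → ℕ)
    (ht : ∀ p i, t p i =
      ((B \ P).filter (fun b => p ∈ b ∧ (b \ P.sup id).card = i)).card)
    (c : Fin v → ℚ)
    (hc : ∀ p, c p = (t p 3 : ℚ) + (t p 2 : ℚ) / 2 + (t p 1 : ℚ) / 3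
      + (t p 0 : ℚ) / 4)
    (w x y z : Fin v)
    (hB : ({w, x, y, z} : Finset (Fin v)) ∈ P)
    (hbig : 4 ≤ max (max (t w 3) (t x 3)) (max (t y 3) (t z 3))) :
    c w + c x + c y + c z ≤ (v : ℚ) / 3 + 5 * ρ - 19 / 3 := by
  obtain rfl : t = tCount B P := funext₂ ht
  obtain rfl : c = cWeight B P := funext hc
  subst hcard
  obtain ⟨p, hp, h₄⟩ : ∃ p ∈ ({w, x, y, z} : Finset (Fin v)), 4 ≤ tCount B P p 3 := by
    simp only [le_max_iff] at hbig
    rcases hbig with (h | h) | (h | h) <;> exact ⟨_, by simp, h⟩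
  have hsum := hPPC.sum_cWeight_le hpack hmax hB hp h₄
  rwa [sum_eq_of_card_eq_four (hpack.1 _ (hPPC.1 hB))] at hsum
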